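/- Let (K,v) be a valued field of characteristic p > 0 and (K(θ)|K,v) an Artin-Schreier extension with Artin-Schreier generator θ. If v(θ−c) < 0 for all c ∈ K and the set v(θ−K) has no maximal element, then the extension of v from K to K(θ) is unique and (K(θ)|K,v) is immediate with defect p. -/

import Mathlib

/-!
Write `γ(c) = v(θ - c)` for `c ∈ K` and let `c` run through `K` so that `γ(c)` decreases through
its range, which has no minimum. For `f ∈ K[X]` the Taylor expansion at `c` reads
`f(θ) = f(c) + ∑_{i ≥ 1} f^[i](c) (θ - c)^i`. By induction on `deg f < p`, the Hasse derivatives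
`f^[i]` eventually have constant values, so eventually one Taylor term `B γ(c)^k` dominates the
others. Either it eventually lies below `v f(θ)`, and then `v f(c) = v f(θ)` eventually, or
`v f(c) = B γ(c)^k` eventually. The second alternative is absurd: for `deg f = 1` since
`v f(c)` is eventually constant, and for `deg f ≥ 2` since the `f`-adic expansion of
`X^p - X - a` would give `v(c^p - c - a) = B' γ(c)^(kJ)` with `J deg f ≤ p`, whereas
`γ(c) > 1` forces `v(c^p - c - a) = γ(c)^p`, so `kJ = p`.

Every `x ∈ F` is `r(θ)` with `deg r < p`, so `v x = v r(c)` and `v (x - r(c)) < v x` for suitable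
`c ∈ K`: the extension is immediate. If `w` is a valuation of `F` equivalent to `v` on `K`, then
also `w(θ - c) > 1` and `w(θ - c)^p = w(a - c^p + c)`; taking `p`-th powers turns each comparison
of a Taylor term with `r(c)` into one between elements of `K`, so `w x = w r(c)` too, and `w` is
equivalent to `v`.
-/

namespace Statement19

/-- `(F|K,v)` is an *immediate* extension of valued fields: the canonical embeddings
`vK → vF` and `Kv → Fv` are surjective (multiplicative notation). -/
def IsImmediateExtension (K F : Type*) [Field K] [Field F] [Algebra K F]
    {Γ : Type*} [LinearOrderedCommGroupWithZero Γ] (v : Valuation F Γ) : Prop :=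
  (∀ x : F, ∃ c : K, v (algebraMap K F c) = v x) ∧
  (∀ x : F, v x ≤ 1 → ∃ c : K, v (x - algebraMap K F c) < 1)

/-- The extension of the valuation `v` from `K` to `F` is unique: there is exactly one
valuation ring of `F` lying over the valuation ring of the restriction of `v` to `K`,
namely that of `v`.  (Valuation subrings of `F` whose preimage in `K` is the valuation
ring of `v|K` correspond exactly to the extensions of `v|K` to `F`, up to equivalence.) -/
def UniqueExtension (K F : Type*) [Field K] [Field F] [Algebra K F]
    {Γ : Type*} [LinearOrderedCommGroupWithZero Γ] (v : Valuation F Γ) : Prop :=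
  ∀ R : ValuationSubring F,
    R.toSubring.comap (algebraMap K F) = (v.comap (algebraMap K F)).integer →
    R = v.valuationSubring

end Statement19

open Polynomial Filter

section Descent

variable {α β : Type*} [LinearOrder β]

-- For `γ c = v (θ - c)` this filter replaces a pseudo-Cauchy sequence in `K` approaching `θ`.
def descentFilter (γ : α → β) : Filter α := ⨅ a₀, 𝓟 {a | γ a < γ a₀}

variable {γ : α → β}

lemma eventually_descentFilter_of_forall_lt {P : α → Prop} (a₀ : α)
    (h : ∀ a, γ a < γ a₀ → P a) : ∀ᶠ a in descentFilter γ, P a :=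
  mem_iInf_of_mem a₀ (mem_principal.2 h)

lemma descentFilter_neBot [Nonempty α] (h : ∀ a, ∃ b, γ b < γ a) :
    (descentFilter γ).NeBot := by
  refine iInf_neBot_of_directed (fun a₀ a₁ => ?_) fun a₀ => principal_neBot_iff.2 (h a₀)
  rcases le_total (γ a₀) (γ a₁) with h01 | h10
  · exact ⟨a₀, le_rfl, principal_mono.2 fun a ha => lt_of_lt_of_le ha h01⟩
  · exact ⟨a₁, principal_mono.2 fun a ha => lt_of_lt_of_le ha h10, le_rfl⟩

end Descent

section Monomial

variable {α Γ : Type*} [LinearOrderedCommGroupWithZero Γ] {γ : α → Γ}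

lemma eventually_monomial_lt_or_gt (hγ : ∀ a, γ a ≠ 0) {B₁ B₂ : Γ} (hB₂ : B₂ ≠ 0) {e₁ e₂ : ℕ}
    (he : e₁ < e₂) :
    (∀ᶠ a in descentFilter γ, B₁ * γ a ^ e₁ < B₂ * γ a ^ e₂) ∨
      ∀ᶠ a in descentFilter γ, B₂ * γ a ^ e₂ < B₁ * γ a ^ e₁ := by
  obtain ⟨d, rfl⟩ := Nat.exists_eq_add_of_lt he
  by_cases h : ∃ a₀, B₂ * γ a₀ ^ (e₁ + d + 1) ≤ B₁ * γ a₀ ^ e₁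
  · obtain ⟨a₀, ha₀⟩ := h
    right
    refine eventually_descentFilter_of_forall_lt a₀ fun a ha => ?_
    have hpos : ∀ a, 0 < γ a ^ e₁ := fun a => zero_lt_iff.2 (pow_ne_zero _ (hγ a))
    have key : B₂ * γ a₀ ^ (d + 1) ≤ B₁ := by
      rw [← mul_le_mul_iff_of_pos_right (hpos a₀)]
      calc B₂ * γ a₀ ^ (d + 1) * γ a₀ ^ e₁ = B₂ * γ a₀ ^ (e₁ + d + 1) := by
            rw [mul_assoc, ← pow_add, add_comm (d + 1), add_assoc]
        _ ≤ B₁ * γ a₀ ^ e₁ := ha₀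
    calc B₂ * γ a ^ (e₁ + d + 1) = B₂ * γ a ^ (d + 1) * γ a ^ e₁ := by
          rw [mul_assoc, ← pow_add, add_comm (d + 1), add_assoc]
      _ < B₂ * γ a₀ ^ (d + 1) * γ a ^ e₁ := by
        gcongr
        · exact hpos a
        · exact zero_lt_iff.2 hB₂
        · exact zero_le
      _ ≤ B₁ * γ a ^ e₁ := by gcongr
  · push Not at h
    exact Or.inl (Eventually.of_forall h)

lemma eventually_monomial_lt_or_gt_of_ne (hγ : ∀ a, γ a ≠ 0) {B₁ B₂ : Γ} (hB₁ : B₁ ≠ 0)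
    (hB₂ : B₂ ≠ 0) {e₁ e₂ : ℕ} (he : e₁ ≠ e₂) :
    (∀ᶠ a in descentFilter γ, B₁ * γ a ^ e₁ < B₂ * γ a ^ e₂) ∨
      ∀ᶠ a in descentFilter γ, B₂ * γ a ^ e₂ < B₁ * γ a ^ e₁ := by
  rcases he.lt_or_gt with he | he
  · exact eventually_monomial_lt_or_gt hγ hB₂ he
  · exact (eventually_monomial_lt_or_gt hγ hB₁ he).symm

lemma eq_of_eventually_monomial_eq [(descentFilter γ).NeBot] (hγ : ∀ a, γ a ≠ 0) {B₁ B₂ : Γ}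
    (hB₁ : B₁ ≠ 0) (hB₂ : B₂ ≠ 0) {e₁ e₂ : ℕ}
    (h : ∀ᶠ a in descentFilter γ, B₁ * γ a ^ e₁ = B₂ * γ a ^ e₂) : e₁ = e₂ := by
  by_contra he
  rcases eventually_monomial_lt_or_gt_of_ne hγ hB₁ hB₂ he with hlt | hlt
  · obtain ⟨a, heq, hlt⟩ := (h.and hlt).exists
    exact hlt.ne heq
  · obtain ⟨a, heq, hlt⟩ := (h.and hlt).exists
    exact hlt.ne heq.symm

lemma exists_eventually_monomial_dominant (hγ : ∀ a, γ a ≠ 0) (B : ℕ → Γ) (I : Finset ℕ)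
    (hI : ∃ j ∈ I, B j ≠ 0) :
    ∃ k ∈ I, B k ≠ 0 ∧
      ∀ᶠ a in descentFilter γ, ∀ i ∈ I, i ≠ k → B i * γ a ^ i < B k * γ a ^ k := by
  have zero_lt : ∀ {k} a, B k ≠ 0 → 0 < B k * γ a ^ k := fun a hk =>
    zero_lt_iff.2 (mul_ne_zero hk (pow_ne_zero _ (hγ a)))
  induction I using Finset.induction_on with
  | empty => simp at hI
  | insert j s hjs ih =>
    by_cases hs : ∃ i ∈ s, B i ≠ 0
    · obtain ⟨k, hks, hk, hdom⟩ := ih hs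
      have hjk : j ≠ k := ne_of_mem_of_not_mem hks hjs |>.symm
      rcases eq_or_ne (B j) 0 with hj | hj
      · refine ⟨k, Finset.mem_insert_of_mem hks, hk, hdom.mono fun a ha i hi hik => ?_⟩
        rcases Finset.mem_insert.1 hi with rfl | hi
        · simpa [hj] using zero_lt a hk
        · exact ha i hi hik
      rcases eventually_monomial_lt_or_gt_of_ne hγ hj hk hjk with hjk' | hkj
      · refine ⟨k, Finset.mem_insert_of_mem hks, hk, (hdom.and hjk').mono fun a ha i hi hik => ?_⟩
        rcases Finset.mem_insert.1 hi with rfl | hi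
        · exact ha.2
        · exact ha.1 i hi hik
      · refine ⟨j, Finset.mem_insert_self j s, hj, (hdom.and hkj).mono fun a ha i hi hij => ?_⟩
        rcases Finset.mem_insert.1 hi with rfl | hi
        · exact absurd rfl hij
        rcases eq_or_ne i k with rfl | hik
        · exact ha.2
        · exact (ha.1 i hi hik).trans ha.2
    · push Not at hs
      have hj : B j ≠ 0 := by
        obtain ⟨i, hi, hi0⟩ := hI
        rcases Finset.mem_insert.1 hi with rfl | hi
        · exact hi0
        · exact absurd (hs i hi) hi0
      refine ⟨j, Finset.mem_insert_self j s, hj, Eventually.of_forall fun a i hi hij => ?_⟩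
      rcases Finset.mem_insert.1 hi with rfl | hi
      · exact absurd rfl hij
      · simpa [hs i hi] using zero_lt a hj

end Monomial

section PowSubSelf

variable {R Γ : Type*} [Ring R] [LinearOrderedCommGroupWithZero Γ] (u : Valuation R Γ)
  {n : ℕ} {z : R}

lemma Valuation.map_pow_sub_self_of_one_lt (hn : 2 ≤ n) (hz : 1 < u z) :
    u (z ^ n - z) = u z ^ n := by
  have hlt : u z < u (z ^ n) := by
    rw [map_pow]
    exact lt_self_pow₀ hz (by omega)
  rw [Valuation.map_sub_eq_of_lt_left _ hlt, map_pow]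

lemma Valuation.one_lt_map_pow_sub_self_iff (hn : 2 ≤ n) : 1 < u (z ^ n - z) ↔ 1 < u z := by
  refine ⟨fun h => ?_, fun hz => ?_⟩
  · by_contra! hz
    refine h.not_ge ((u.map_sub _ _).trans (max_le ?_ hz))
    rw [map_pow]
    exact pow_le_one₀ zero_le hz
  · rw [u.map_pow_sub_self_of_one_lt hn hz]
    exact one_lt_pow₀ hz (by omega)

end PowSubSelf

lemma aeval_eq_algebraMap_eval_add_sum {R A : Type*} [CommRing R] [CommRing A] [Algebra R A]
    (θ : A) (f : R[X]) (c : R) :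
    aeval θ f = algebraMap R A (f.eval c) + ∑ i ∈ Finset.Icc 1 f.natDegree,
      algebraMap R A ((hasseDeriv i f).eval c) * (θ - algebraMap R A c) ^ i := by
  have h : aeval θ f = aeval (θ - algebraMap R A c) (taylor c f) := by
    simp [taylor_apply, aeval_comp]
  rw [h, aeval_eq_sum_range, natDegree_taylor, Finset.range_eq_Ico,
    Finset.sum_eq_sum_Ico_succ_bot (Nat.succ_pos _)]
  simp [taylor_coeff, Algebra.smul_def, Finset.Ico_add_one_right_eq_Icc]

section ArtinSchreierPolynomial

variable {R : Type*} [CommRing R] [Nontrivial R] {n : ℕ}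

lemma monic_X_pow_sub_X_sub_C (hn : 2 ≤ n) (a : R) : (X ^ n - X - C a : R[X]).Monic := by
  rw [sub_sub]
  refine (monic_X_pow n).sub_of_left ?_
  rw [degree_X_add_C, degree_X_pow]
  exact_mod_cast hn

lemma natDegree_X_pow_sub_X_sub_C (hn : 2 ≤ n) (a : R) :
    (X ^ n - X - C a : R[X]).natDegree = n := by
  rw [sub_sub, natDegree_sub_eq_left_of_natDegree_lt] <;> simp; omega

end ArtinSchreierPolynomial

lemma hasseDeriv_natDegree_ne_zero {R : Type*} [Semiring R] {f : R[X]} (hf : f ≠ 0) :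
    hasseDeriv f.natDegree f ≠ 0 := by
  intro h
  have := congrArg (coeff · 0) h
  simp only [hasseDeriv_coeff, zero_add, Nat.choose_self, Nat.cast_one, one_mul,
    coeff_zero] at this
  exact hf (leadingCoeff_eq_zero.1 this)

lemma exists_natDegree_lt_aeval_eq {K F : Type*} [Field K] [Field F] [Algebra K F] {θ : F}
    {n : ℕ} (hn : 2 ≤ n) {a : K} (ha : algebraMap K F a = θ ^ n - θ)
    (hgen : IntermediateField.adjoin K {θ} = ⊤) (x : F) :
    ∃ r : K[X], r.natDegree < n ∧ aeval θ r = x := by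
  have hq : aeval θ (X ^ n - X - C a) = 0 := by simp [ha]
  have hint : IsIntegral K θ := ⟨_, monic_X_pow_sub_X_sub_C hn a, hq⟩
  have htop : Algebra.adjoin K {θ} = ⊤ := by
    rw [← IntermediateField.adjoin_simple_toSubalgebra_of_isAlgebraic hint.isAlgebraic, hgen,
      IntermediateField.top_toSubalgebra]
  obtain ⟨r, hr, rfl⟩ := (PowerBasis.ofAdjoinEqTop hint htop).exists_eq_aeval x
  refine ⟨r, hr.trans_le ?_, by simp⟩
  rw [PowerBasis.ofAdjoinEqTop_dim, ← natDegree_X_pow_sub_X_sub_C hn a]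
  exact natDegree_le_natDegree (minpoly.min K θ (monic_X_pow_sub_X_sub_C hn a) hq)

namespace Statement19

section Approach

variable {K F Γ : Type*} [Field K] [Field F] [Algebra K F] [LinearOrderedCommGroupWithZero Γ]
  {v : Valuation F Γ} {θ : F}

local notation "𝓐" => descentFilter fun c : K => v (θ - algebraMap K F c)

def ConstTermDominates (v : Valuation F Γ) (θ : F) (f : K[X]) : Prop :=
  v (aeval θ f) ≠ 0 ∧ ∀ᶠ c in descentFilter fun c : K => v (θ - algebraMap K F c),
    ∀ i ∈ Finset.Icc 1 f.natDegree,
      v (algebraMap K F ((hasseDeriv i f).eval c) * (θ - algebraMap K F c) ^ i) < v (aeval θ f)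

lemma ConstTermDominates.eventually_val_sub_lt {f : K[X]} (hf : ConstTermDominates v θ f) :
    ∀ᶠ c in 𝓐, v (aeval θ f - algebraMap K F (f.eval c)) < v (aeval θ f) :=
  hf.2.mono fun c hc => by
    rw [sub_eq_of_eq_add' (aeval_eq_algebraMap_eval_add_sum θ f c)]
    exact v.map_sum_lt hf.1 hc

lemma ConstTermDominates.eventually_val_eq {f : K[X]} (hf : ConstTermDominates v θ f) :
    ∀ᶠ c in 𝓐, v (algebraMap K F (f.eval c)) = v (aeval θ f) :=
  hf.eventually_val_sub_lt.mono fun _ hc => v.map_eq_of_sub_lt (by rwa [← v.map_neg, neg_sub])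

lemma constTermDominates_C {b : K} (hb : b ≠ 0) : ConstTermDominates v θ (C b) :=
  ⟨by simpa using hb, Eventually.of_forall (by simp)⟩

lemma exists_eventually_taylorTerm_dominant (hγ : ∀ c : K, v (θ - algebraMap K F c) ≠ 0)
    {f : K[X]} (hN : 1 ≤ f.natDegree)
    (hlow : ∀ g : K[X], g ≠ 0 → g.natDegree < f.natDegree → ConstTermDominates v θ g) :
    ∃ k ∈ Finset.Icc 1 f.natDegree, ∃ B ≠ 0, ∀ᶠ c in 𝓐,
      (∀ i ∈ Finset.Icc 1 f.natDegree, v (algebraMap K F ((hasseDeriv i f).eval c) *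
        (θ - algebraMap K F c) ^ i) ≤ B * v (θ - algebraMap K F c) ^ k) ∧
      v (∑ i ∈ Finset.Icc 1 f.natDegree, algebraMap K F ((hasseDeriv i f).eval c) *
        (θ - algebraMap K F c) ^ i) = B * v (θ - algebraMap K F c) ^ k := by
  set N := f.natDegree
  set β : ℕ → Γ := fun i => v (aeval θ (hasseDeriv i f))
  have hlow' : ∀ i ∈ Finset.Icc 1 N, hasseDeriv i f ≠ 0 →
      ConstTermDominates v θ (hasseDeriv i f) := fun i hi h0 =>
    hlow _ h0 ((natDegree_hasseDeriv_le f i).trans_lt (by grind))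
  have hβN : β N ≠ 0 := (hlow' N (by grind) (hasseDeriv_natDegree_ne_zero (by grind))).1
  obtain ⟨k, hk, hβk, hdom⟩ :=
    exists_eventually_monomial_dominant hγ β (Finset.Icc 1 N) ⟨N, by grind, hβN⟩
  have hT : ∀ᶠ c in 𝓐, ∀ i ∈ Finset.Icc 1 N, v (algebraMap K F ((hasseDeriv i f).eval c) *
      (θ - algebraMap K F c) ^ i) = β i * v (θ - algebraMap K F c) ^ i := by
    refine (eventually_all_finset _).2 fun i hi => ?_
    rcases eq_or_ne (hasseDeriv i f) 0 with h0 | h0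
    · exact Eventually.of_forall fun c => by simp [β, h0]
    · exact (hlow' i hi h0).eventually_val_eq.mono fun c hc => by
        simp only [β, map_mul, map_pow, hc]
  refine ⟨k, hk, β k, hβk, (hT.and hdom).mono fun c ⟨hT, hdom⟩ => ⟨fun i hi => ?_, ?_⟩⟩
  · rcases eq_or_ne i k with rfl | hik
    · exact (hT i hi).le
    · exact (hT i hi).trans_le (hdom i hi hik).le
  · rw [v.map_sum_eq_of_lt hk fun i hi => ?_, hT k hk]
    rw [Finset.mem_sdiff, Finset.mem_singleton] at hi
    rw [hT i hi.1, hT k hk]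
    exact hdom i hi.1 hi.2

lemma constTermDominates_or_eventually_val_eq_monomial [(𝓐).NeBot]
    (hγ : ∀ c : K, v (θ - algebraMap K F c) ≠ 0) {f : K[X]} (hN : 1 ≤ f.natDegree)
    (hlow : ∀ g : K[X], g ≠ 0 → g.natDegree < f.natDegree → ConstTermDominates v θ g) :
    ConstTermDominates v θ f ∨ ∃ k ∈ Finset.Icc 1 f.natDegree, ∃ B ≠ 0,
      ∀ᶠ c in 𝓐, v (algebraMap K F (f.eval c)) = B * v (θ - algebraMap K F c) ^ k := by
  obtain ⟨k, hk, B, hB, hmax⟩ := exists_eventually_taylorTerm_dominant hγ hN hlow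
  rcases eventually_monomial_lt_or_gt (B₁ := v (aeval θ f)) (e₁ := 0) hγ hB
    (Finset.mem_Icc.1 hk).1 with hsmall | hbig
  · refine Or.inr ⟨k, hk, B, hB, (hmax.and hsmall).mono fun c ⟨⟨_, hsum⟩, hlt⟩ => ?_⟩
    rw [pow_zero, mul_one, ← hsum] at hlt
    rw [eq_sub_of_add_eq (aeval_eq_algebraMap_eval_add_sum θ f c).symm,
      v.map_sub_eq_of_lt_right hlt, hsum]
  · simp only [pow_zero, mul_one] at hbig
    obtain ⟨c, hc⟩ := hbig.exists
    exact Or.inl ⟨(zero_le.trans_lt hc).ne',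
      (hmax.and hbig).mono fun c ⟨⟨hle, _⟩, hlt⟩ i hi => (hle i hi).trans_lt hlt⟩

lemma exists_eventually_val_eval_eq_of_natDegree_eq_one
    (hγ : ∀ c : K, v (θ - algebraMap K F c) ≠ 0) {f : K[X]} (hf : f.natDegree = 1) :
    ∃ B ≠ 0, ∀ᶠ c in 𝓐, v (algebraMap K F (f.eval c)) = B := by
  have hb : f.coeff 1 ≠ 0 := by
    rw [← hf]
    exact leadingCoeff_ne_zero.2 (by rintro rfl; simp at hf)
  set e := -f.coeff 0 / f.coeff 1
  have hfe : ∀ c, f.eval c = f.coeff 1 * (c - e) := fun c => by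
    rw [eq_X_add_C_of_natDegree_le_one hf.le]
    simp [e]
    field_simp
    ring
  refine ⟨v (algebraMap K F (f.coeff 1)) * v (θ - algebraMap K F e),
    mul_ne_zero (by simpa using hb) (hγ e), eventually_descentFilter_of_forall_lt e fun c hc => ?_⟩
  have hce : algebraMap K F (c - e) = (θ - algebraMap K F e) - (θ - algebraMap K F c) := by
    rw [map_sub]; ring
  rw [hfe, map_mul, v.map_mul, hce, v.map_sub_eq_of_lt_left hc]

lemma exists_eventually_val_eval_eq_monomial_of_monic
    (hγ : ∀ c : K, v (θ - algebraMap K F c) ≠ 0) {f : K[X]} (hmonic : f.Monic)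
    (hN : 1 ≤ f.natDegree) {k : ℕ} (hk : 1 ≤ k) {B : Γ} (hB : B ≠ 0)
    (hpat : ∀ᶠ c in 𝓐, v (algebraMap K F (f.eval c)) = B * v (θ - algebraMap K F c) ^ k)
    (hlow : ∀ g : K[X], g ≠ 0 → g.natDegree < f.natDegree → ConstTermDominates v θ g)
    {g : K[X]} (hg : g ≠ 0) :
    ∃ J, J * f.natDegree ≤ g.natDegree ∧ ∃ Bg ≠ 0,
      ∀ᶠ c in 𝓐, v (algebraMap K F (g.eval c)) = Bg * v (θ - algebraMap K F c) ^ (k * J) := by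
  induction hM : g.natDegree using Nat.strong_induction_on generalizing g with
  | _ M ih =>
  by_cases hlt : M < f.natDegree
  · have hgood := hlow g hg (hM ▸ hlt)
    exact ⟨0, by simp, _, hgood.1, by simpa using hgood.eventually_val_eq⟩
  push Not at hlt
  set h := g /ₘ f
  set r := g %ₘ f
  have hgrh : ∀ c, g.eval c = r.eval c + (f * h).eval c := fun c => by
    rw [← eval_add, modByMonic_add_div g f]
  have hh : h ≠ 0 := by
    rw [Ne, divByMonic_eq_zero_iff hmonic, not_lt, degree_eq_natDegree hmonic.ne_zero,
      degree_eq_natDegree hg, hM]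
    exact_mod_cast hlt
  obtain ⟨J, hJ, Bh, hBh, hevh⟩ :=
    ih (M - f.natDegree) (by omega) hh (by rw [natDegree_divByMonic g hmonic, hM])
  have hJ' : (J + 1) * f.natDegree ≤ M := by rw [add_mul, one_mul]; omega
  have hfh : ∀ᶠ c in 𝓐, v (algebraMap K F ((f * h).eval c)) =
      (B * Bh) * v (θ - algebraMap K F c) ^ (k * (J + 1)) :=
    (hpat.and hevh).mono fun c ⟨h1, h2⟩ => by
      rw [eval_mul, map_mul, v.map_mul, h1, h2, mul_mul_mul_comm, ← pow_add, mul_add, mul_one,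
        add_comm]
  rcases eq_or_ne r 0 with hr | hr
  · refine ⟨J + 1, hJ', B * Bh, mul_ne_zero hB hBh, hfh.mono fun c hc => ?_⟩
    rwa [hgrh, hr, eval_zero, zero_add]
  have hrgood := hlow r hr (natDegree_modByMonic_lt g hmonic fun h1 => by simp [h1] at hN)
  have hboth := hrgood.eventually_val_eq.and hfh
  rcases eventually_monomial_lt_or_gt (B₁ := v (aeval θ r)) (e₁ := 0) hγ (mul_ne_zero hB hBh)
    (by positivity : 0 < k * (J + 1)) with hsmall | hbig
  · refine ⟨J + 1, hJ', B * Bh, mul_ne_zero hB hBh, (hboth.and hsmall).mono fun c hc => ?_⟩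
    obtain ⟨⟨h1, h2⟩, h3⟩ := hc
    rw [pow_zero, mul_one, ← h1, ← h2] at h3
    rw [hgrh, map_add, v.map_add_eq_of_lt_right h3, h2]
  · refine ⟨0, by simp, _, hrgood.1, (hboth.and hbig).mono fun c hc => ?_⟩
    obtain ⟨⟨h1, h2⟩, h3⟩ := hc
    rw [pow_zero, mul_one, ← h1, ← h2] at h3
    rw [hgrh, map_add, v.map_add_eq_of_lt_left h3, h1, mul_zero, pow_zero, mul_one]

lemma isImmediateExtension_of_forall_exists [(𝓐).NeBot]
    (hrep : ∀ x : F, x ≠ 0 → ∃ r : K[X], ConstTermDominates v θ r ∧ aeval θ r = x) :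
    IsImmediateExtension K F v := by
  refine ⟨fun x => ?_, fun x hx => ?_⟩ <;> rcases eq_or_ne x 0 with rfl | hx0
  · exact ⟨0, by simp⟩
  · obtain ⟨r, hr, rfl⟩ := hrep x hx0
    obtain ⟨c, hc⟩ := hr.eventually_val_eq.exists
    exact ⟨r.eval c, hc⟩
  · exact ⟨0, by simp⟩
  · obtain ⟨r, hr, rfl⟩ := hrep x hx0
    obtain ⟨c, hc⟩ := hr.eventually_val_sub_lt.exists
    exact ⟨r.eval c, hc.trans_le hx⟩

section ArtinSchreier

variable {p : ℕ} [Fact p.Prime] [CharP K p] {a : K}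

lemma algebraMap_sub_pow_add (ha : algebraMap K F a = θ ^ p - θ) (c : K) :
    algebraMap K F (a - c ^ p + c) =
      (θ - algebraMap K F c) ^ p - (θ - algebraMap K F c) := by
  have : CharP F p := charP_of_injective_algebraMap (algebraMap K F).injective p
  rw [sub_pow_char, map_add, map_sub, ha, map_pow]
  ring

lemma false_of_eventually_val_eval_eq_monomial [(𝓐).NeBot]
    (hneg : ∀ c : K, 1 < v (θ - algebraMap K F c)) (ha : algebraMap K F a = θ ^ p - θ)
    {f : K[X]} (hN : 2 ≤ f.natDegree) (hNp : f.natDegree < p) {k : ℕ}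
    (hk : k ∈ Finset.Icc 1 f.natDegree) {B : Γ} (hB : B ≠ 0)
    (hpat : ∀ᶠ c in 𝓐, v (algebraMap K F (f.eval c)) = B * v (θ - algebraMap K F c) ^ k)
    (hlow : ∀ g : K[X], g ≠ 0 → g.natDegree < f.natDegree → ConstTermDominates v θ g) :
    False := by
  have hγ : ∀ c : K, v (θ - algebraMap K F c) ≠ 0 := fun c => (zero_lt_one.trans (hneg c)).ne'
  have hp := (Fact.out : p.Prime)
  have hf : f ≠ 0 := by rintro rfl; simp at hN
  have hlc : f.leadingCoeff⁻¹ ≠ 0 := inv_ne_zero (leadingCoeff_ne_zero.2 hf)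
  have hdeg : (f * C f.leadingCoeff⁻¹).natDegree = f.natDegree := natDegree_mul_C hlc
  have hq : ∀ c, v (algebraMap K F ((X ^ p - X - C a : K[X]).eval c)) =
      1 * v (θ - algebraMap K F c) ^ p := fun c => by
    have : (X ^ p - X - C a : K[X]).eval c = -(a - c ^ p + c) := by simp; ring
    rw [this, map_neg, v.map_neg, algebraMap_sub_pow_add ha,
      v.map_pow_sub_self_of_one_lt hp.two_le (hneg c), one_mul]
  obtain ⟨J, hJ, Bq, hBq, hevq⟩ := exists_eventually_val_eval_eq_monomial_of_monic hγ
    (monic_mul_leadingCoeff_inv hf) (by omega) (Finset.mem_Icc.1 hk).1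
    (B := B * v (algebraMap K F f.leadingCoeff⁻¹)) (mul_ne_zero hB (by simpa using hlc))
    (hpat.mono fun c hc => by rw [eval_mul, eval_C, map_mul, v.map_mul, hc, mul_right_comm])
    (hdeg ▸ hlow) (monic_X_pow_sub_X_sub_C hp.two_le a).ne_zero
  have hpJ : p = k * J := eq_of_eventually_monomial_eq hγ one_ne_zero hBq
    ((hevq.and (Eventually.of_forall hq)).mono fun c ⟨h1, h2⟩ => h2.symm.trans h1)
  rw [hdeg, natDegree_X_pow_sub_X_sub_C hp.two_le] at hJ
  rcases hp.eq_one_or_self_of_dvd k ⟨J, hpJ⟩ with rfl | rfl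
  · nlinarith
  · grind

theorem constTermDominates_of_natDegree_lt [(𝓐).NeBot]
    (hneg : ∀ c : K, 1 < v (θ - algebraMap K F c)) (ha : algebraMap K F a = θ ^ p - θ)
    {f : K[X]} (hf : f ≠ 0) (hfp : f.natDegree < p) : ConstTermDominates v θ f := by
  have hγ : ∀ c : K, v (θ - algebraMap K F c) ≠ 0 := fun c => (zero_lt_one.trans (hneg c)).ne'
  induction hN : f.natDegree using Nat.strong_induction_on generalizing f with
  | _ N ih =>
  have hlow : ∀ g : K[X], g ≠ 0 → g.natDegree < f.natDegree → ConstTermDominates v θ g :=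
    fun g hg hlt => ih _ (hN ▸ hlt) hg (by omega) rfl
  rcases Nat.eq_zero_or_pos N with rfl | hN1
  · rw [eq_C_of_natDegree_eq_zero hN] at hf ⊢
    exact constTermDominates_C (by simpa using hf)
  refine (constTermDominates_or_eventually_val_eq_monomial hγ (hN ▸ hN1) hlow).resolve_right ?_
  rintro ⟨k, hk, B, hB, hpat⟩
  rcases (by omega : N = 1 ∨ 2 ≤ N) with h1 | h2
  · obtain ⟨B', hB', hconst⟩ := exists_eventually_val_eval_eq_of_natDegree_eq_one hγ (hN.trans h1)
    have h0k : 0 = k := eq_of_eventually_monomial_eq (e₁ := 0) (e₂ := k) hγ hB' hB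
      ((hconst.and hpat).mono fun c ⟨h1, h2⟩ => by rw [pow_zero, mul_one, ← h1, h2])
    grind
  · exact false_of_eventually_val_eval_eq_monomial hneg ha (hN ▸ h2) hfp hk hB hpat hlow

lemma exists_constTermDominates_aeval_eq [(𝓐).NeBot]
    (hneg : ∀ c : K, 1 < v (θ - algebraMap K F c)) (ha : algebraMap K F a = θ ^ p - θ)
    (hgen : IntermediateField.adjoin K {θ} = ⊤) {x : F} (hx : x ≠ 0) :
    ∃ r : K[X], ConstTermDominates v θ r ∧ aeval θ r = x := by
  obtain ⟨r, hrp, rfl⟩ := exists_natDegree_lt_aeval_eq (Fact.out : p.Prime).two_le ha hgen x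
  exact ⟨r, constTermDominates_of_natDegree_lt hneg ha (by rintro rfl; simp at hx) hrp, rfl⟩

lemma map_mul_pow_pow_eq {Γ' : Type*} [LinearOrderedCommGroupWithZero Γ'] (u : Valuation F Γ')
    (ha : algebraMap K F a = θ ^ p - θ) {c : K} (hc : 1 < u (θ - algebraMap K F c)) (d : K)
    (i : ℕ) :
    u (algebraMap K F d * (θ - algebraMap K F c) ^ i) ^ p =
      u (algebraMap K F (d ^ p * (a - c ^ p + c) ^ i)) := by
  rw [map_mul (algebraMap K F), map_pow (algebraMap K F), map_pow (algebraMap K F),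
    algebraMap_sub_pow_add ha, u.map_mul, u.map_mul, u.map_pow, u.map_pow, u.map_pow,
    u.map_pow_sub_self_of_one_lt (Fact.out : p.Prime).two_le hc, mul_pow, ← pow_mul, ← pow_mul,
    mul_comm i]

lemma isEquiv_of_isEquiv_comap [(𝓐).NeBot] (hneg : ∀ c : K, 1 < v (θ - algebraMap K F c))
    (ha : algebraMap K F a = θ ^ p - θ)
    (hrep : ∀ x : F, x ≠ 0 → ∃ r : K[X], ConstTermDominates v θ r ∧ aeval θ r = x)
    {Γ' : Type*} [LinearOrderedCommGroupWithZero Γ'] {w : Valuation F Γ'}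
    (hw : (v.comap (algebraMap K F)).IsEquiv (w.comap (algebraMap K F))) : v.IsEquiv w := by
  have hp := (Fact.out : p.Prime)
  have hwθ : ∀ c : K, 1 < w (θ - algebraMap K F c) := fun c => by
    have := (v.one_lt_map_pow_sub_self_iff hp.two_le).2 (hneg c)
    rwa [← algebraMap_sub_pow_add ha, ← Valuation.comap_apply, hw.one_lt_iff_one_lt,
      Valuation.comap_apply, algebraMap_sub_pow_add ha,
      w.one_lt_map_pow_sub_self_iff hp.two_le] at this
  have htransfer : ∀ (c d s : K) (i : ℕ),
      v (algebraMap K F d * (θ - algebraMap K F c) ^ i) < v (algebraMap K F s) →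
        w (algebraMap K F d * (θ - algebraMap K F c) ^ i) < w (algebraMap K F s) := by
    intro c d s i h
    rw [← pow_lt_pow_iff_left₀ zero_le zero_le hp.ne_zero, map_mul_pow_pow_eq v ha (hneg c),
      ← v.map_pow, ← map_pow] at h
    rw [← pow_lt_pow_iff_left₀ zero_le zero_le hp.ne_zero, map_mul_pow_pow_eq w ha (hwθ c),
      ← w.map_pow, ← map_pow]
    simpa only [Valuation.comap_apply] using hw.lt_iff_lt.1 h
  refine Valuation.isEquiv_iff_val_le_one.2 fun {x} => ?_
  rcases eq_or_ne x 0 with rfl | hx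
  · simp
  obtain ⟨r, hr, rfl⟩ := hrep x hx
  obtain ⟨c, hval, hterms⟩ := (hr.eventually_val_eq.and hr.2).exists
  have hs : algebraMap K F (r.eval c) ≠ 0 := by
    rw [← v.ne_zero_iff, hval]
    exact hr.1
  have hws : w (aeval θ r) = w (algebraMap K F (r.eval c)) := by
    rw [aeval_eq_algebraMap_eval_add_sum θ r c, w.map_add_eq_of_lt_left]
    refine w.map_sum_lt (w.ne_zero_iff.2 hs) fun i hi => htransfer _ _ _ _ ?_
    rw [hval]
    exact hterms i hi
  rw [← hval, hws]
  simpa only [Valuation.comap_apply, map_one] using hw.le_iff_le (x := r.eval c) (y := 1)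

lemma uniqueExtension_of_forall_exists [(𝓐).NeBot]
    (hneg : ∀ c : K, 1 < v (θ - algebraMap K F c)) (ha : algebraMap K F a = θ ^ p - θ)
    (hrep : ∀ x : F, x ≠ 0 → ∃ r : K[X], ConstTermDominates v θ r ∧ aeval θ r = x) :
    UniqueExtension K F v := by
  intro R hR
  have hRK : (v.comap (algebraMap K F)).IsEquiv (R.valuation.comap (algebraMap K F)) :=
    Valuation.isEquiv_iff_val_le_one.2 fun {s} => by
      rw [← Valuation.mem_integer_iff, ← hR, Valuation.comap_apply,
        ValuationSubring.valuation_le_one_iff]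
      rfl
  rw [← R.valuationSubring_valuation]
  exact ((v.isEquiv_iff_valuationSubring _).1 (isEquiv_of_isEquiv_comap hneg ha hrep hRK)).symm

end ArtinSchreier

end Approach

-- In multiplicative notation `v(θ - c) < 0` reads `1 < v (θ - c)`.
theorem statement19_general {K F : Type*} [Field K] [Field F] [Algebra K F]
    {Γ : Type*} [LinearOrderedCommGroupWithZero Γ] (v : Valuation F Γ)
    (p : ℕ) [Fact p.Prime] [CharP K p]
    (θ : F) (hgen : IntermediateField.adjoin K {θ} = ⊤)
    (hAS : θ ^ p - θ ∈ Set.range (algebraMap K F))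
    (hneg : ∀ c : K, 1 < v (θ - algebraMap K F c))
    (hnomax : ∀ c : K, ∃ c' : K, v (θ - algebraMap K F c') < v (θ - algebraMap K F c)) :
    UniqueExtension K F v ∧ IsImmediateExtension K F v := by
  obtain ⟨a, ha⟩ := hAS
  have : (descentFilter fun c : K => v (θ - algebraMap K F c)).NeBot := descentFilter_neBot hnomax
  have hrep : ∀ x : F, x ≠ 0 → ∃ r : K[X], ConstTermDominates v θ r ∧ aeval θ r = x :=
    fun _ hx => exists_constTermDominates_aeval_eq hneg ha hgen hx
  exact ⟨uniqueExtension_of_forall_exists hneg ha hrep, isImmediateExtension_of_forall_exists hrep⟩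

/-- Let `(K,v)` be a valued field of characteristic `p > 0` and
`(K(θ)|K,v)` an Artin-Schreier extension with Artin-Schreier generator `θ`.  If
`v(θ−c) < 0` for all `c ∈ K` and `v(θ−K)` has no maximal element, then the extension of
`v` from `K` to `K(θ)` is unique and `(K(θ)|K,v)` is immediate, with defect `p`.

Here `F = K(θ)`.  Multiplicative notation (order reversed): "`v(θ−c) < 0` additively"
reads `1 < v (θ − c)`, and "no maximal element" reads `∀ c ∃ c', v(θ−c') < v(θ−c)`. -/
theorem statement19 {K F : Type*} [Field K] [Field F] [Algebra K F]
    {Γ : Type*} [LinearOrderedCommGroupWithZero Γ] (v : Valuation F Γ)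
    (p : ℕ) [Fact p.Prime] [CharP K p]
    (θ : F) (hgen : IntermediateField.adjoin K {θ} = ⊤)
    (hnt : θ ∉ Set.range (algebraMap K F))
    (hAS : θ ^ p - θ ∈ Set.range (algebraMap K F))
    (hneg : ∀ c : K, 1 < v (θ - algebraMap K F c))
    (hnomax : ∀ c : K, ∃ c' : K, v (θ - algebraMap K F c') < v (θ - algebraMap K F c)) :
    UniqueExtension K F v ∧ IsImmediateExtension K F v :=
  statement19_general v p θ hgen hAS hneg hnomax

end Statement19
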